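/- arXiv:1203.1538 — 4 statements merged into one kernel-verified Lean document; each statement's English description precedes it below -/
import Mathlib

section
/- Let A be an M×N real matrix, y ∈ ℝ^M, and suppose x* is the unique minimizer of ‖x‖₁ subject to Ax = y. Then for every constant M₀ > 0 there exists t > 0 (depending only on A, y, M₀) such that for all x ∈ ℝ^N with Ax = y and 0 < ‖x − x*‖₂ ≤ M₀, one has ‖x‖₁ − ‖x*‖₁ ≥ t‖x − x*‖₂. -/
/-!
The one-sided derivative `D u = l1DirDeriv xs u` of `l1` at `xs` in direction `u` is
continuous and positively homogeneous; it bounds `l1 (xs + u) - l1 xs` from below (convexity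
of `|·|`), and the two agree for small `u`. Uniqueness of the minimiser therefore makes `D`
positive on `ker A \ {0}`, and minimising `D` over the compact unit sphere of `ker A` gives
`D u ≥ t * l2 u` there, which yields `l1 x - l1 xs ≥ D (x - xs) ≥ t * l2 (x - xs)`.
-/

open Matrix BigOperators

noncomputable def l1 {N : ℕ} (x : Fin N → ℝ) : ℝ := ∑ i, |x i|

noncomputable def l2 {N : ℕ} (x : Fin N → ℝ) : ℝ := Real.sqrt (∑ i, (x i) ^ 2)

noncomputable def sgn {N : ℕ} (x : Fin N → ℝ) : Fin N → ℝ := fun i => Real.sign (x i)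

noncomputable def Pmat {M N : ℕ} (A : Matrix (Fin M) (Fin N) ℝ) : Matrix (Fin N) (Fin N) ℝ :=
  1 - Aᵀ * (A * Aᵀ)⁻¹ * A

theorem exists_pos_mul_norm_le_of_homogeneous {E : Type*} [NormedAddCommGroup E]
    [NormedSpace ℝ E] [FiniteDimensional ℝ E] (K : Submodule ℝ E) {f : E → ℝ}
    (hf : Continuous f) (hhom : ∀ c : ℝ, 0 ≤ c → ∀ u, f (c • u) = c * f u)
    (hpos : ∀ u ∈ K, u ≠ 0 → 0 < f u) : ∃ t > 0, ∀ u ∈ K, t * ‖u‖ ≤ f u := by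
  set S : Set E := (K : Set E) ∩ Metric.sphere 0 1
  have hS : ∀ u ∈ K, u ≠ 0 → ‖u‖⁻¹ • u ∈ S := fun u hu hu0 =>
    ⟨K.smul_mem _ hu, by simp [norm_smul, hu0]⟩
  have hf0 : f 0 = 0 := by simpa using hhom 0 le_rfl 0
  rcases S.eq_empty_or_nonempty with hSe | hSne
  · refine ⟨1, one_pos, fun u hu => ?_⟩
    obtain rfl : u = 0 := by
      by_contra hu0
      exact (hSe ▸ hS u hu hu0 : _ ∈ (∅ : Set E))
    simp [hf0]
  · have hScpt : IsCompact S := (isCompact_sphere 0 1).inter_left K.closed_of_finiteDimensional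
    obtain ⟨u₀, ⟨hu₀K, hu₀1⟩, hmin⟩ := hScpt.exists_isMinOn hSne hf.continuousOn
    have hu₀0 : u₀ ≠ 0 := ne_zero_of_mem_unit_sphere ⟨u₀, hu₀1⟩
    refine ⟨f u₀, hpos u₀ hu₀K hu₀0, fun u hu => ?_⟩
    rcases eq_or_ne u 0 with rfl | hu0
    · simp [hf0]
    calc f u₀ * ‖u‖ ≤ f (‖u‖⁻¹ • u) * ‖u‖ := by gcongr; exact hmin (hS u hu hu0)
      _ = f u := by
        rw [hhom _ (by positivity), mul_comm, ← mul_assoc,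
          mul_inv_cancel₀ (norm_ne_zero_iff.mpr hu0), one_mul]

theorem Real.sign_mul_le_abs_add_sub_abs (a b : ℝ) : Real.sign a * b ≤ |a + b| - |a| := by
  rcases lt_trichotomy a 0 with ha | rfl | ha
  · rw [Real.sign_of_neg ha, abs_of_neg ha]; linarith [neg_abs_le (a + b)]
  · simp
  · rw [Real.sign_of_pos ha, abs_of_pos ha]; linarith [le_abs_self (a + b)]

theorem Real.abs_add_eq_of_abs_lt {a b : ℝ} (h : |b| < |a|) :
    |a + b| = |a| + Real.sign a * b := by
  rcases lt_trichotomy a 0 with ha | rfl | ha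
  · rw [abs_of_neg ha] at h
    rw [Real.sign_of_neg ha, abs_of_neg ha, abs_of_neg (by linarith [le_abs_self b])]; ring
  · simp at h; linarith [abs_nonneg b]
  · rw [abs_of_pos ha] at h
    rw [Real.sign_of_pos ha, abs_of_pos ha, abs_of_pos (by linarith [neg_abs_le b])]; ring

noncomputable def l1DirDeriv {N : ℕ} (xs u : Fin N → ℝ) : ℝ :=
  ∑ i, if xs i = 0 then |u i| else sgn xs i * u i

section l1DirDeriv

variable {N : ℕ} (xs : Fin N → ℝ)

theorem l1DirDeriv_le (u : Fin N → ℝ) : l1DirDeriv xs u ≤ l1 (xs + u) - l1 xs := by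
  rw [l1, l1, ← Finset.sum_sub_distrib]
  refine Finset.sum_le_sum fun i _ => ?_
  split_ifs with h
  · simp [h]
  · exact Real.sign_mul_le_abs_add_sub_abs (xs i) (u i)

theorem l1_add_eq_of_forall_abs_lt {u : Fin N → ℝ} (h : ∀ i, xs i ≠ 0 → |u i| < |xs i|) :
    l1 (xs + u) = l1 xs + l1DirDeriv xs u := by
  rw [l1, l1, l1DirDeriv, ← Finset.sum_add_distrib]
  refine Finset.sum_congr rfl fun i _ => ?_
  split_ifs with hi
  · simp [hi]
  · exact Real.abs_add_eq_of_abs_lt (h i hi)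

theorem l1DirDeriv_smul {c : ℝ} (hc : 0 ≤ c) (u : Fin N → ℝ) :
    l1DirDeriv xs (c • u) = c * l1DirDeriv xs u := by
  rw [l1DirDeriv, l1DirDeriv, Finset.mul_sum]
  refine Finset.sum_congr rfl fun i _ => ?_
  split_ifs
  · simp [abs_mul, abs_of_nonneg hc]
  · simp only [Pi.smul_apply, smul_eq_mul]; ring

theorem continuous_l1DirDeriv : Continuous (l1DirDeriv xs) := by
  refine continuous_finsetSum _ fun i _ => ?_
  split_ifs
  · exact (continuous_apply i).abs
  · exact continuous_const.mul (continuous_apply i)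

theorem l1DirDeriv_pos_of_forall_lt {u : Fin N → ℝ}
    (h : ∀ ε : ℝ, 0 < ε → l1 xs < l1 (xs + ε • u)) : 0 < l1DirDeriv xs u := by
  have hsmall : ∀ᶠ ε in nhdsWithin (0 : ℝ) (Set.Ioi 0),
      ∀ i, xs i ≠ 0 → |(ε • u) i| < |xs i| := by
    refine Filter.eventually_all.mpr fun i => ?_
    by_cases hi : xs i = 0
    · exact .of_forall fun _ h => absurd hi h
    · have hcont : ContinuousAt (fun ε : ℝ => |(ε • u) i|) 0 := by fun_prop
      filter_upwards [nhdsWithin_le_nhds (hcont.eventually_lt continuousAt_const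
        (show |((0 : ℝ) • u) i| < |xs i| by simpa using hi))] with ε hε _ using hε
  obtain ⟨ε, hε, hε0⟩ := (hsmall.and self_mem_nhdsWithin).exists
  have := h ε hε0
  rw [l1_add_eq_of_forall_abs_lt xs hε, l1DirDeriv_smul xs hε0.le] at this
  exact pos_of_mul_pos_right (by linarith) hε0.le

end l1DirDeriv

theorem l2_eq_norm_toLp {N : ℕ} (x : Fin N → ℝ) : l2 x = ‖WithLp.toLp 2 x‖ := by
  simp [l2, EuclideanSpace.norm_eq]

theorem stmt0 {M N : ℕ} (A : Matrix (Fin M) (Fin N) ℝ) (y : Fin M → ℝ)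
    (xs : Fin N → ℝ) (hxs : A *ᵥ xs = y)
    (huniq : ∀ x : Fin N → ℝ, A *ᵥ x = y → x ≠ xs → l1 xs < l1 x) :
    ∀ M₀ : ℝ, 0 < M₀ → ∃ t : ℝ, 0 < t ∧
      ∀ x : Fin N → ℝ, A *ᵥ x = y → 0 < l2 (x - xs) → l2 (x - xs) ≤ M₀ →
        l1 x - l1 xs ≥ t * l2 (x - xs) := by
  intro M₀ _
  set K : Submodule ℝ (EuclideanSpace ℝ (Fin N)) :=
    (LinearMap.ker A.mulVecLin).comap (WithLp.linearEquiv 2 ℝ (Fin N → ℝ)).toLinearMap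
  have hK : ∀ u, u ∈ K ↔ A *ᵥ u.ofLp = 0 := fun u => Iff.rfl
  have hpos : ∀ u ∈ K, u ≠ 0 → 0 < l1DirDeriv xs u.ofLp := by
    intro u hu hu0
    refine l1DirDeriv_pos_of_forall_lt xs fun ε hε => huniq _ ?_ ?_
    · rw [mulVec_add, mulVec_smul, (hK u).mp hu, hxs, smul_zero, add_zero]
    · simpa [hε.ne'] using hu0
  obtain ⟨t, ht, hle⟩ := exists_pos_mul_norm_le_of_homogeneous K
    ((continuous_l1DirDeriv xs).comp (PiLp.continuous_ofLp 2 _))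
    (fun c hc u => l1DirDeriv_smul xs hc u.ofLp) hpos
  refine ⟨t, ht, fun x hx _ _ => ?_⟩
  have hxK : WithLp.toLp 2 (x - xs) ∈ K := by
    rw [hK, WithLp.ofLp_toLp, mulVec_sub, hx, hxs, sub_self]
  calc t * l2 (x - xs) ≤ l1DirDeriv xs (x - xs) := by
        simpa [l2_eq_norm_toLp] using hle _ hxK
    _ ≤ l1 x - l1 xs := by simpa using l1DirDeriv_le xs (x - xs)
end

section
/- Suppose x* is the unique minimizer of ‖x‖₁ subject to Ax = y, and t > 0 satisfies ‖x‖₁ − ‖x*‖₁ ≥ t‖x − x*‖₂ for all x in the solution space with ‖x − x*‖₂ ≤ M₀. Let x_{n+1} = xₙ − γP sgn(xₙ) with Axₙ = y and ‖xₙ − x*‖₂ ≤ M₀. Then for any μ > 1, if ‖xₙ − x*‖₂ ≥ γ·(μ/(2t))·max_x ‖P sgn(x)‖₂², then ‖x_{n+1} − x*‖₂² ≤ ‖xₙ − x*‖₂² − γ²(μ−1)·max_x ‖P sgn(x)‖₂². -/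
open Matrix BigOperators

/-!
The update direction `P sgn xₙ` is a subgradient of `‖·‖₁` at `xₙ` projected onto `ker A`, and
`xₙ - x*` lies in `ker A`, so `⟪P sgn xₙ, xₙ - x*⟫ = ⟪sgn xₙ, xₙ - x*⟫ ≥ ‖xₙ‖₁ - ‖x*‖₁ ≥ t ‖xₙ - x*‖₂`.
Expanding `‖xₙ - γ P sgn xₙ - x*‖₂²` then gives a decrease of at least
`2γ t ‖xₙ - x*‖₂ - γ² C ≥ γ² μ C - γ² C`.
-/

theorem Real.sign_mul_self_eq_abs (r : ℝ) : Real.sign r * r = |r| := by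
  rcases lt_trichotomy r 0 with h | rfl | h
  · rw [Real.sign_of_neg h, abs_of_neg h]; ring
  · simp
  · rw [Real.sign_of_pos h, abs_of_pos h]; ring

theorem Real.sign_mul_le_abs (r z : ℝ) : Real.sign r * z ≤ |z| := by
  rcases Real.sign_apply_eq r with h | h | h <;> rw [h]
  · linarith [neg_abs_le z]
  · simp
  · simpa using le_abs_self z

theorem l1_sub_le_sgn_dotProduct {N : ℕ} (x z : Fin N → ℝ) :
    l1 x - l1 z ≤ sgn x ⬝ᵥ (x - z) := by
  rw [l1, l1, ← Finset.sum_sub_distrib]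
  refine Finset.sum_le_sum fun i _ => ?_
  have hx := Real.sign_mul_self_eq_abs (x i)
  have hz := Real.sign_mul_le_abs (x i) (z i)
  simp only [sgn, Pi.sub_apply] at *
  linarith

theorem l2_sq {N : ℕ} (x : Fin N → ℝ) : l2 x ^ 2 = x ⬝ᵥ x := by
  rw [l2, Real.sq_sqrt (by positivity), dotProduct]
  simp only [sq]

theorem l2_sub_smul_sq {N : ℕ} (d v : Fin N → ℝ) (γ : ℝ) :
    l2 (d - γ • v) ^ 2 = l2 d ^ 2 - 2 * γ * (v ⬝ᵥ d) + γ ^ 2 * l2 v ^ 2 := by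
  simp only [l2_sq, sub_dotProduct, dotProduct_sub, smul_dotProduct, dotProduct_smul,
    dotProduct_comm d v, smul_eq_mul]
  ring

theorem Pmat_mulVec_dotProduct_of_mulVec_eq_zero {M N : ℕ} (A : Matrix (Fin M) (Fin N) ℝ)
    (s : Fin N → ℝ) {d : Fin N → ℝ} (hd : A *ᵥ d = 0) :
    (Pmat A *ᵥ s) ⬝ᵥ d = s ⬝ᵥ d := by
  have hrange : (Aᵀ * (A * Aᵀ)⁻¹ * A) *ᵥ s ⬝ᵥ d = 0 := by
    rw [Matrix.mul_assoc, ← mulVec_mulVec, mulVec_transpose, ← dotProduct_mulVec, hd,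
      dotProduct_zero]
  rw [Pmat, sub_mulVec, one_mulVec, sub_dotProduct, hrange, sub_zero]

theorem stmt4_general {M N : ℕ} (A : Matrix (Fin M) (Fin N) ℝ)
    (y : Fin M → ℝ) (xs : Fin N → ℝ) (hxs : A *ᵥ xs = y)
    (M₀ t : ℝ) (ht : 0 < t)
    (hgrow : ∀ x : Fin N → ℝ, A *ᵥ x = y → l2 (x - xs) ≤ M₀ →
      l1 x - l1 xs ≥ t * l2 (x - xs))
    (C : ℝ) (hC : IsGreatest (Set.range fun z : Fin N → ℝ => (l2 (Pmat A *ᵥ sgn z)) ^ 2) C)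
    (γ μ : ℝ) (hγ : 0 < γ)
    (xn xn1 : Fin N → ℝ) (hrec : xn1 = xn - γ • (Pmat A *ᵥ sgn xn))
    (hfeas : A *ᵥ xn = y) (hbound : l2 (xn - xs) ≤ M₀)
    (hfar : l2 (xn - xs) ≥ γ * (μ / (2 * t)) * C) :
    (l2 (xn1 - xs)) ^ 2 ≤ (l2 (xn - xs)) ^ 2 - γ ^ 2 * (μ - 1) * C := by
  set v := Pmat A *ᵥ sgn xn
  have hstep : xn1 - xs = (xn - xs) - γ • v := by rw [hrec]; abel
  have hker : A *ᵥ (xn - xs) = 0 := by rw [mulVec_sub, hfeas, hxs, sub_self]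
  have hdescent : t * l2 (xn - xs) ≤ v ⬝ᵥ (xn - xs) := by
    rw [Pmat_mulVec_dotProduct_of_mulVec_eq_zero A _ hker]
    exact (hgrow xn hfeas hbound).trans (l1_sub_le_sgn_dotProduct xn xs)
  have hfar' : γ * μ * C / 2 ≤ t * l2 (xn - xs) := by
    calc γ * μ * C / 2 = t * (γ * (μ / (2 * t)) * C) := by field_simp
      _ ≤ t * l2 (xn - xs) := mul_le_mul_of_nonneg_left hfar ht.le
  have hvC : l2 v ^ 2 ≤ C := hC.2 ⟨xn, rfl⟩
  rw [hstep, l2_sub_smul_sq]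
  nlinarith [mul_le_mul_of_nonneg_left (hfar'.trans hdescent) hγ.le,
    mul_le_mul_of_nonneg_left hvC (sq_nonneg γ)]

theorem stmt4 {M N : ℕ} (A : Matrix (Fin M) (Fin N) ℝ) (hinv : IsUnit (A * Aᵀ))
    (y : Fin M → ℝ) (xs : Fin N → ℝ) (hxs : A *ᵥ xs = y)
    (huniq : ∀ x : Fin N → ℝ, A *ᵥ x = y → x ≠ xs → l1 xs < l1 x)
    (M₀ t : ℝ) (hM₀ : 0 < M₀) (ht : 0 < t)
    (hgrow : ∀ x : Fin N → ℝ, A *ᵥ x = y → l2 (x - xs) ≤ M₀ →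
      l1 x - l1 xs ≥ t * l2 (x - xs))
    (C : ℝ) (hC : IsGreatest (Set.range fun z : Fin N → ℝ => (l2 (Pmat A *ᵥ sgn z)) ^ 2) C)
    (γ μ : ℝ) (hγ : 0 < γ) (hμ : 1 < μ)
    (xn xn1 : Fin N → ℝ) (hrec : xn1 = xn - γ • (Pmat A *ᵥ sgn xn))
    (hfeas : A *ᵥ xn = y) (hbound : l2 (xn - xs) ≤ M₀)
    (hfar : l2 (xn - xs) ≥ γ * (μ / (2 * t)) * C) :
    (l2 (xn1 - xs)) ^ 2 ≤ (l2 (xn - xs)) ^ 2 - γ ^ 2 * (μ - 1) * C :=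
  stmt4_general A y xs hxs M₀ t ht hgrow C hC γ μ hγ xn xn1 hrec hfeas hbound hfar
end

section
/- Let a, b, t, γ > 0 with μ' > 1 and b = (μ'/(2t))·C where C = max_x ‖P sgn(x)‖₂². If a sequence satisfies s_{n+1}² = sₙ² − 2γt·sₙ + γ²C and sₙ ≥ γb, then s_{n+1} < sₙ − γt(1 − 1/μ'). -/
open Matrix BigOperators

/-!
Put `d = γ t (1 - 1/μ')`. Then `(sₙ - d)² = sₙ² - 2γt sₙ + 2γt sₙ/μ' + d²`, and the hypothesis
`sₙ ≥ γ b` says exactly `2γt sₙ/μ' ≥ γ² C`, so `sₙ₊₁² < (sₙ - d)²` as `d > 0`. It remains to see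
`sₙ - d > 0`: from `t² ≤ C` we get `sₙ ≥ γ t μ'/2`, and `μ'/2 > 1 - 1/μ'` for every `μ' > 0`.
-/

lemma one_sub_one_div_lt_half {μ : ℝ} (hμ : 0 < μ) : 1 - 1 / μ < μ / 2 := by
  have h : μ * (1 - 1 / μ) < μ * (μ / 2) := by
    rw [mul_one_sub, mul_one_div_cancel hμ.ne']
    nlinarith [sq_nonneg (μ - 1)]
  exact lt_of_mul_lt_mul_left h hμ.le

lemma sq_sub_mul_one_sub_one_div {s r μ : ℝ} (hμ : μ ≠ 0) :
    (s - r * (1 - 1 / μ)) ^ 2 = s ^ 2 - 2 * r * s + 2 * r * s / μ + (r * (1 - 1 / μ)) ^ 2 := by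
  field_simp
  ring

theorem stmt12_general (t γ C b μ' sn sn1 : ℝ)
    (ht : 0 < t) (hγ : 0 < γ) (ht2 : t ^ 2 ≤ C)
    (hμ : 1 < μ') (hb : b = μ' / (2 * t) * C)
    (hsn1 : sn1 ^ 2 = sn ^ 2 - 2 * γ * t * sn + γ ^ 2 * C)
    (hge : sn ≥ γ * b) :
    sn1 < sn - γ * t * (1 - 1 / μ') := by
  have hμ0 : 0 < μ' := by linarith
  have hd : 0 < γ * t * (1 - 1 / μ') := by
    have : 1 / μ' < 1 := (div_lt_one hμ0).2 hμ
    have := mul_pos hγ ht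
    positivity
  have hkey : γ ^ 2 * C ≤ 2 * (γ * t) * sn / μ' := by
    rw [le_div_iff₀ hμ0]
    calc γ ^ 2 * C * μ' = 2 * (γ * t) * (γ * (μ' / (2 * t) * C)) := by field_simp
      _ ≤ 2 * (γ * t) * sn := by rw [← hb]; gcongr
  have hpos : 0 < sn - γ * t * (1 - 1 / μ') := by
    have hsn : γ * t * (μ' / 2) ≤ sn := by
      calc γ * t * (μ' / 2) = γ * (μ' / (2 * t) * t ^ 2) := by field_simp
        _ ≤ γ * b := by rw [hb]; gcongr
        _ ≤ sn := hge
    have := mul_lt_mul_of_pos_left (one_sub_one_div_lt_half hμ0) (mul_pos hγ ht)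
    linarith
  have hsq : sn1 ^ 2 < (sn - γ * t * (1 - 1 / μ')) ^ 2 := by
    rw [sq_sub_mul_one_sub_one_div hμ0.ne', hsn1]
    linarith [pow_pos hd 2]
  exact (le_abs_self sn1).trans_lt (abs_lt_of_sq_lt_sq hsq hpos.le)

theorem stmt12 (t γ C b μ' sn sn1 : ℝ)
    (ht : 0 < t) (hγ : 0 < γ) (hCpos : 0 < C) (ht2 : t ^ 2 ≤ C)
    (hμ : 1 < μ') (hb : b = μ' / (2 * t) * C)
    (hsn1 : sn1 ^ 2 = sn ^ 2 - 2 * γ * t * sn + γ ^ 2 * C)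
    (hsn1nonneg : 0 ≤ sn1) (hge : sn ≥ γ * b) :
    sn1 < sn - γ * t * (1 - 1 / μ') :=
  stmt12_general t γ C b μ' sn sn1 ht hγ ht2 hμ hb hsn1 hge
end

section
/- Let A ∈ ℝ^{M×N} satisfy the restricted isometry property of order S with constant δ_S, and let x ∈ ℝ^N be p-compressible with magnitude R (0 < p < 1) with best S-sparse approximation x_S. Then ‖A(x − x_S)‖₂ ≤ √(1+δ_S)·(D_p + C_p)·R·S^{1/2−1/p}, where C_p = (1/p − 1)^{−1} and D_p = (2/p − 1)^{−1/2}. -/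
open Matrix BigOperators

/-!
Cut the tail `x - x_S` into blocks of `S` consecutive positions of the ordering `σ`. Each block
is `S`-sparse, so the RIP and the triangle inequality give
`‖A (x - x_S)‖₂ ≤ √(1 + δ) ∑ⱼ ‖blockⱼ‖₂`. The first block is bounded by the whole tail, whose
squared norm is at most `R² ∑_{i ≥ S} (i + 1)^(-2/p) ≤ D_p² R² S^(1 - 2/p)`. The entries of block
`j + 1` are at most `R ((j + 1) S)^(-1/p)`, so its norm is at most `R S^(1/2 - 1/p) (j + 1)^(-1/p)`,
and these sum over `j ≥ 1` to at most `C_p R S^(1/2 - 1/p)`. Both series are compared with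
`∫ t^(-q) dt`.
-/
open Finset

lemma sum_Ico_add_one_rpow_neg_le {q : ℝ} (hq : 1 < q) {a : ℕ} (ha : 0 < a) (b : ℕ) :
    ∑ n ∈ Ico a b, ((n : ℝ) + 1) ^ (-q) ≤ (a : ℝ) ^ (1 - q) / (q - 1) := by
  have ha' : (0 : ℝ) < a := by exact_mod_cast ha
  have hanti : AntitoneOn (fun t : ℝ => t ^ (-q)) (Set.Icc (a : ℝ) b) := fun s hs t _ hst =>
    Real.rpow_le_rpow_of_nonpos (ha'.trans_le hs.1) hst (by linarith)
  have hint := hanti.sum_Ico_le_integral (integrableOn_Ioi_rpow_of_lt (by linarith) ha')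
    fun t ht => Real.rpow_nonneg (ha'.trans ht).le _
  rw [integral_Ioi_rpow_of_lt (by linarith) ha'] at hint
  push_cast at hint
  convert hint using 1
  rw [show -q + 1 = -(q - 1) by ring, div_neg, neg_div, neg_neg, neg_sub]

variable {N : ℕ}

lemma l2_eq_norm (v : Fin N → ℝ) : l2 v = ‖WithLp.toLp 2 v‖ := by
  simp [l2, EuclideanSpace.norm_eq, sq_abs]

lemma l2_nonneg (v : Fin N → ℝ) : 0 ≤ l2 v := Real.sqrt_nonneg _

lemma l2_le_iff {v : Fin N → ℝ} {b : ℝ} (hb : 0 ≤ b) : l2 v ≤ b ↔ ∑ i, v i ^ 2 ≤ b ^ 2 :=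
  Real.sqrt_le_left hb

lemma l2_sum_le {ι : Type*} (s : Finset ι) (g : ι → Fin N → ℝ) :
    l2 (∑ j ∈ s, g j) ≤ ∑ j ∈ s, l2 (g j) := by
  simp only [l2_eq_norm, WithLp.toLp_sum]
  exact norm_sum_le _ _

lemma l2_mulVec_le_of_sparse {M S : ℕ} {A : Matrix (Fin M) (Fin N) ℝ} {δ : ℝ}
    (hA : ∀ T : Finset (Fin N), T.card ≤ S → ∀ c : Fin N → ℝ, (∀ i ∉ T, c i = 0) →
      l2 (A *ᵥ c) ^ 2 ≤ (1 + δ) * l2 c ^ 2)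
    {T : Finset (Fin N)} (hT : T.card ≤ S) {c : Fin N → ℝ} (hc : ∀ i ∉ T, c i = 0) :
    l2 (A *ᵥ c) ≤ √(1 + δ) * l2 c :=
  calc l2 (A *ᵥ c) = √(l2 (A *ᵥ c) ^ 2) := (Real.sqrt_sq (l2_nonneg _)).symm
    _ ≤ √((1 + δ) * l2 c ^ 2) := Real.sqrt_le_sqrt (hA T hT c hc)
    _ = √(1 + δ) * l2 c := by rw [Real.sqrt_mul' _ (sq_nonneg _), Real.sqrt_sq (l2_nonneg _)]

section OrderBlocks

variable (σ : Equiv.Perm (Fin N)) (S : ℕ)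

def orderBlock (j : ℕ) : Finset (Fin N) := {k | (σ.symm k : ℕ) / S = j}

def orderBlockPart (j : ℕ) (z : Fin N → ℝ) : Fin N → ℝ :=
  fun k => if k ∈ orderBlock σ S j then z k else 0

variable {σ S}

lemma mem_orderBlock_iff (hS : 0 < S) {j : ℕ} {k : Fin N} :
    k ∈ orderBlock σ S j ↔ j * S ≤ σ.symm k ∧ (σ.symm k : ℕ) < j * S + S := by
  simp only [orderBlock, mem_filter, mem_univ, true_and, Nat.div_eq_iff hS]
  omega

lemma card_orderBlock_le (hS : 0 < S) (j : ℕ) : (orderBlock σ S j).card ≤ S := by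
  calc (orderBlock σ S j).card ≤ (Ico (j * S) (j * S + S)).card := by
        refine card_le_card_of_injOn (fun k => (σ.symm k : ℕ)) (fun k hk => ?_) ?_
        · simpa [mem_orderBlock_iff hS] using hk
        · exact (Fin.val_injective.comp σ.symm.injective).injOn
    _ = S := by simp

lemma orderBlockPart_of_notMem {j : ℕ} {z : Fin N → ℝ} {k : Fin N} (hk : k ∉ orderBlock σ S j) :
    orderBlockPart σ S j z k = 0 := if_neg hk

lemma sum_orderBlockPart {n : ℕ} (hn : N ≤ n) (z : Fin N → ℝ) :
    ∑ j ∈ range n, orderBlockPart σ S j z = z := by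
  ext k
  have hk : (σ.symm k : ℕ) / S ∈ range n :=
    mem_range.2 (((σ.symm k : ℕ).div_le_self S).trans_lt ((σ.symm k).isLt.trans_le hn))
  simp [orderBlockPart, orderBlock, hk]

lemma l2_orderBlockPart_le (j : ℕ) (z : Fin N → ℝ) : l2 (orderBlockPart σ S j z) ≤ l2 z := by
  refine Real.sqrt_le_sqrt (sum_le_sum fun k _ => ?_)
  unfold orderBlockPart
  split_ifs <;> simp [sq_nonneg]

lemma l2_orderBlockPart_le_of_abs_le (hS : 0 < S) {j : ℕ} {z : Fin N → ℝ} {b : ℝ} (hb0 : 0 ≤ b)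
    (hb : ∀ k ∈ orderBlock σ S j, |z k| ≤ b) : l2 (orderBlockPart σ S j z) ≤ √S * b := by
  rw [l2_le_iff (by positivity), mul_pow, Real.sq_sqrt (Nat.cast_nonneg S)]
  calc ∑ k, orderBlockPart σ S j z k ^ 2 = ∑ k ∈ orderBlock σ S j, z k ^ 2 := by
        simp [orderBlockPart, ite_pow, sum_ite_mem]
    _ ≤ (orderBlock σ S j).card * b ^ 2 := by
        have hsq : ∀ k ∈ orderBlock σ S j, z k ^ 2 ≤ b ^ 2 := fun k hk =>
          sq_le_sq.2 ((hb k hk).trans_eq (abs_of_nonneg hb0).symm)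
        simpa using sum_le_card_nsmul _ _ _ hsq
    _ ≤ S * b ^ 2 := by gcongr; exact_mod_cast card_orderBlock_le hS j

end OrderBlocks

lemma l2_mulVec_le_sum_l2_orderBlockPart {M S : ℕ} {A : Matrix (Fin M) (Fin N) ℝ} {δ : ℝ}
    (hA : ∀ T : Finset (Fin N), T.card ≤ S → ∀ c : Fin N → ℝ, (∀ i ∉ T, c i = 0) →
      l2 (A *ᵥ c) ^ 2 ≤ (1 + δ) * l2 c ^ 2)
    (hS : 0 < S) (σ : Equiv.Perm (Fin N)) {n : ℕ} (hn : N ≤ n) (z : Fin N → ℝ) :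
    l2 (A *ᵥ z) ≤ √(1 + δ) * ∑ j ∈ range n, l2 (orderBlockPart σ S j z) :=
  calc l2 (A *ᵥ z) = l2 (∑ j ∈ range n, A *ᵥ orderBlockPart σ S j z) := by
        rw [← Matrix.mulVec_sum, sum_orderBlockPart hn]
    _ ≤ ∑ j ∈ range n, l2 (A *ᵥ orderBlockPart σ S j z) := l2_sum_le _ _
    _ ≤ ∑ j ∈ range n, √(1 + δ) * l2 (orderBlockPart σ S j z) :=
        sum_le_sum fun j _ =>
          l2_mulVec_le_of_sparse hA (card_orderBlock_le hS j) fun _ => orderBlockPart_of_notMem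
    _ = √(1 + δ) * ∑ j ∈ range n, l2 (orderBlockPart σ S j z) := (mul_sum ..).symm

section CompressibleTail

variable {σ : Equiv.Perm (Fin N)} {S : ℕ} {p R : ℝ} {z : Fin N → ℝ}

lemma orderBlockPart_zero_eq_zero (hS : 0 < S) (hhead : ∀ k, (σ.symm k : ℕ) < S → z k = 0) :
    orderBlockPart σ S 0 z = 0 := by
  ext k
  by_cases hk : k ∈ orderBlock σ S 0
  · simpa [orderBlockPart, hk] using hhead k (by simpa using ((mem_orderBlock_iff hS).1 hk).2)
  · exact orderBlockPart_of_notMem hk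

lemma l2_tail_le_of_abs_le_rpow (hp0 : 0 < p) (hp2 : p < 2) (hR : 0 ≤ R) (hS : 0 < S)
    (hhead : ∀ k, (σ.symm k : ℕ) < S → z k = 0)
    (hz : ∀ k, |z k| ≤ R * (((σ.symm k : ℕ) : ℝ) + 1) ^ (-(1 / p))) :
    l2 z ≤ R * (2 / p - 1) ^ (-(1 / 2 : ℝ)) * (S : ℝ) ^ ((1 : ℝ) / 2 - 1 / p) := by
  have hq : 1 < 2 / p := by rw [lt_div_iff₀ hp0]; linarith
  have hsq : ∀ i : Fin N, z (σ i) ^ 2 ≤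
      if S ≤ (i : ℕ) then R ^ 2 * (((i : ℕ) : ℝ) + 1) ^ (-(2 / p)) else 0 := by
    intro i
    split_ifs with hi
    · calc z (σ i) ^ 2 = |z (σ i)| ^ 2 := (sq_abs _).symm
        _ ≤ (R * (((i : ℕ) : ℝ) + 1) ^ (-(1 / p))) ^ 2 := by gcongr; simpa using hz (σ i)
        _ = R ^ 2 * (((i : ℕ) : ℝ) + 1) ^ (-(2 / p)) := by
          rw [mul_pow, ← Real.rpow_mul_natCast (by positivity)]; ring_nf
    · simp [hhead (σ i) (by simpa using not_le.1 hi)]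
  have hsum : ∑ k, z k ^ 2 ≤ R ^ 2 * ((S : ℝ) ^ (1 - 2 / p) / (2 / p - 1)) :=
    calc ∑ k, z k ^ 2 = ∑ i, z (σ i) ^ 2 := (Equiv.sum_comp σ _).symm
      _ ≤ ∑ i : Fin N, if S ≤ (i : ℕ) then R ^ 2 * (((i : ℕ) : ℝ) + 1) ^ (-(2 / p)) else 0 :=
          sum_le_sum fun i _ => hsq i
      _ = R ^ 2 * ∑ n ∈ Ico S N, ((n : ℝ) + 1) ^ (-(2 / p)) := by
          rw [Fin.sum_univ_eq_sum_range (fun n => if S ≤ n then R ^ 2 * ((n : ℝ) + 1) ^ (-(2 / p))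
            else 0), ← sum_filter, mul_sum]
          congr 1
          ext n
          simp only [mem_filter, mem_range, mem_Ico]
          omega
      _ ≤ R ^ 2 * ((S : ℝ) ^ (1 - 2 / p) / (2 / p - 1)) := by
          gcongr; exact sum_Ico_add_one_rpow_neg_le hq hS N
  rw [l2_le_iff (by positivity)]
  convert hsum using 1
  rw [mul_pow, mul_pow, ← Real.rpow_mul_natCast (by linarith),
    ← Real.rpow_mul_natCast (by positivity)]
  norm_num
  rw [Real.rpow_neg_one]
  ring_nf

lemma l2_orderBlockPart_succ_le (hp0 : 0 < p) (hR : 0 ≤ R) (hS : 0 < S)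
    (hz : ∀ k, |z k| ≤ R * (((σ.symm k : ℕ) : ℝ) + 1) ^ (-(1 / p))) (j : ℕ) :
    l2 (orderBlockPart σ S (j + 1) z) ≤
      R * (S : ℝ) ^ ((1 : ℝ) / 2 - 1 / p) * ((j : ℝ) + 1) ^ (-(1 / p)) := by
  have hS' : (0 : ℝ) < S := by exact_mod_cast hS
  calc l2 (orderBlockPart σ S (j + 1) z) ≤ √S * (R * (((j : ℝ) + 1) * S) ^ (-(1 / p))) := by
        refine l2_orderBlockPart_le_of_abs_le hS (by positivity) fun k hk => (hz k).trans ?_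
        have hjk : (((j + 1) * S : ℕ) : ℝ) ≤ (σ.symm k : ℕ) := by
          exact_mod_cast ((mem_orderBlock_iff hS).1 hk).1
        push_cast at hjk
        exact mul_le_mul_of_nonneg_left (Real.rpow_le_rpow_of_nonpos (by positivity)
          (by linarith) (neg_nonpos.2 (by positivity))) hR
    _ = R * (S : ℝ) ^ ((1 : ℝ) / 2 - 1 / p) * ((j : ℝ) + 1) ^ (-(1 / p)) := by
        rw [Real.mul_rpow (by positivity) hS'.le, Real.sqrt_eq_rpow, sub_eq_add_neg,
          Real.rpow_add hS']
        ring

lemma sum_l2_orderBlockPart_le (hp0 : 0 < p) (hp1 : p < 1) (hR : 0 ≤ R) (hS : 0 < S)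
    (hz : ∀ k, |z k| ≤ R * (((σ.symm k : ℕ) : ℝ) + 1) ^ (-(1 / p))) (n : ℕ) :
    ∑ j ∈ Ico 1 n, l2 (orderBlockPart σ S (j + 1) z) ≤
      R * (1 / p - 1)⁻¹ * (S : ℝ) ^ ((1 : ℝ) / 2 - 1 / p) := by
  have hq : 1 < 1 / p := by rw [lt_div_iff₀ hp0]; linarith
  calc ∑ j ∈ Ico 1 n, l2 (orderBlockPart σ S (j + 1) z)
      ≤ ∑ j ∈ Ico 1 n, R * (S : ℝ) ^ ((1 : ℝ) / 2 - 1 / p) * ((j : ℝ) + 1) ^ (-(1 / p)) :=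
        sum_le_sum fun j _ => l2_orderBlockPart_succ_le hp0 hR hS hz j
    _ = R * (S : ℝ) ^ ((1 : ℝ) / 2 - 1 / p) * ∑ j ∈ Ico 1 n, ((j : ℝ) + 1) ^ (-(1 / p)) :=
        (mul_sum ..).symm
    _ ≤ R * (S : ℝ) ^ ((1 : ℝ) / 2 - 1 / p) * (((1 : ℕ) : ℝ) ^ (1 - 1 / p) / (1 / p - 1)) := by
        gcongr; exact sum_Ico_add_one_rpow_neg_le hq one_pos n
    _ = R * (1 / p - 1)⁻¹ * (S : ℝ) ^ ((1 : ℝ) / 2 - 1 / p) := by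
        rw [Nat.cast_one, Real.one_rpow]; ring

end CompressibleTail

theorem stmt19_general {M N : ℕ} (A : Matrix (Fin M) (Fin N) ℝ) (x : Fin N → ℝ)
    (p R δ : ℝ) (S : ℕ)
    (hp0 : 0 < p) (hp1 : p < 1) (hR : 0 < R) (hS1 : 1 ≤ S) (hSN : S < N)
    (hRIP : ∀ T : Finset (Fin N), T.card ≤ S → ∀ c : Fin N → ℝ,
      (∀ i ∉ T, c i = 0) →
        (1 - δ) * (l2 c) ^ 2 ≤ (l2 (A *ᵥ c)) ^ 2 ∧
          (l2 (A *ᵥ c)) ^ 2 ≤ (1 + δ) * (l2 c) ^ 2)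
    (σ : Equiv.Perm (Fin N))
    (hcomp : ∀ i : Fin N, |x (σ i)| ≤ R * ((i : ℝ) + 1) ^ (-(1 / p))) :
    let xS : Fin N → ℝ := fun k => if ((σ.symm k : ℕ) < S) then x k else 0
    l2 (A *ᵥ (x - xS)) ≤
      Real.sqrt (1 + δ) * ((2 / p - 1) ^ (-(1 / 2 : ℝ)) + (1 / p - 1)⁻¹) * R *
        (S : ℝ) ^ ((1 : ℝ) / 2 - 1 / p) := by
  intro xS
  have hhead : ∀ k, (σ.symm k : ℕ) < S → (x - xS) k = 0 := fun k hk => by simp [xS, hk]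
  have hz : ∀ k, |(x - xS) k| ≤ R * (((σ.symm k : ℕ) : ℝ) + 1) ^ (-(1 / p)) := by
    intro k
    by_cases hk : (σ.symm k : ℕ) < S
    · rw [hhead k hk, abs_zero]; positivity
    · simpa [xS, hk] using hcomp (σ.symm k)
  have hsplit := l2_mulVec_le_sum_l2_orderBlockPart (fun T hT c hc => (hRIP T hT c hc).2) hS1 σ
    N.le_succ (x - xS)
  rw [sum_range_succ', range_eq_Ico, sum_eq_sum_Ico_succ_bot (by omega),
    orderBlockPart_zero_eq_zero hS1 hhead] at hsplit
  calc l2 (A *ᵥ (x - xS))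
      ≤ √(1 + δ) * (l2 (orderBlockPart σ S 1 (x - xS)) +
          ∑ j ∈ Ico 1 N, l2 (orderBlockPart σ S (j + 1) (x - xS)) + l2 0) := hsplit
    _ ≤ √(1 + δ) * (R * (2 / p - 1) ^ (-(1 / 2 : ℝ)) * (S : ℝ) ^ ((1 : ℝ) / 2 - 1 / p) +
          R * (1 / p - 1)⁻¹ * (S : ℝ) ^ ((1 : ℝ) / 2 - 1 / p) + 0) := by
        gcongr
        · exact (l2_orderBlockPart_le 1 _).trans
            (l2_tail_le_of_abs_le_rpow hp0 (by linarith) hR.le hS1 hhead hz)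
        · exact sum_l2_orderBlockPart_le hp0 hp1 hR.le hS1 hz N
        · simp [l2]
    _ = √(1 + δ) * ((2 / p - 1) ^ (-(1 / 2 : ℝ)) + (1 / p - 1)⁻¹) * R *
          (S : ℝ) ^ ((1 : ℝ) / 2 - 1 / p) := by ring

theorem stmt19 {M N : ℕ} (A : Matrix (Fin M) (Fin N) ℝ) (x : Fin N → ℝ)
    (p R δ : ℝ) (S : ℕ)
    (hp0 : 0 < p) (hp1 : p < 1) (hR : 0 < R) (hS1 : 1 ≤ S) (hSN : S < N)
    (hδ : 0 ≤ δ)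
    (hRIP : ∀ T : Finset (Fin N), T.card ≤ S → ∀ c : Fin N → ℝ,
      (∀ i ∉ T, c i = 0) →
        (1 - δ) * (l2 c) ^ 2 ≤ (l2 (A *ᵥ c)) ^ 2 ∧
          (l2 (A *ᵥ c)) ^ 2 ≤ (1 + δ) * (l2 c) ^ 2)
    (σ : Equiv.Perm (Fin N))
    (hsort : ∀ i j : Fin N, i ≤ j → |x (σ j)| ≤ |x (σ i)|)
    (hcomp : ∀ i : Fin N, |x (σ i)| ≤ R * ((i : ℝ) + 1) ^ (-(1 / p))) :
    let xS : Fin N → ℝ := fun k => if ((σ.symm k : ℕ) < S) then x k else 0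
    l2 (A *ᵥ (x - xS)) ≤
      Real.sqrt (1 + δ) * ((2 / p - 1) ^ (-(1 / 2 : ℝ)) + (1 / p - 1)⁻¹) * R *
        (S : ℝ) ^ ((1 : ℝ) / 2 - 1 / p) :=
  stmt19_general A x p R δ S hp0 hp1 hR hS1 hSN hRIP σ hcomp
end
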